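/- arXiv:1609.04176 — 3 statements merged into one kernel-verified Lean document; each statement's English description precedes it below -/
import Mathlib

section
/- There exists an RB-template P (with k = 2) such that exec_inf(P), the set of infinite executions of the induced RB-system viewed as a language of infinite words over the finite alphabet of edges of P, is not ω-regular; a witness is the template P⋆ with states {p,q}, initial states {p}, one rendezvous action a, rendezvous edges (p,a_1,p) and (p,a_2,q), and broadcast edges (p,𝔟,p) and (q,𝔟,p). -/
/-! ### Core definitions: RB-templates and RB-systems -/

/-- Edge labels: a rendezvous letter `a_j` (an action together with an index in `[k]`),
or the broadcast letter `𝔟` (represented by `Sum.inr ()`). -/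
abbrev Lab (k : ℕ) (A : Type) := (A × Fin k) ⊕ Unit

/-- Edges of a labeled transition system over states `S`. -/
abbrev EdgeT (k : ℕ) (A S : Type) := S × Lab k A × S

/-- An RB-template: a set of initial states and a set of labeled edges. -/
structure RBTemplate (k : ℕ) (A : Type) (S : Type) where
  I : Set S
  R : Set (EdgeT k A S)

/-- Broadcast totality: every state has an outgoing broadcast edge. -/
def RBTemplate.BTotal {k : ℕ} {A S : Type} (P : RBTemplate k A S) : Prop :=
  ∀ s : S, ∃ t : S, (s, Sum.inr (), t) ∈ P.R

/-- Each rendezvous letter labels at most one edge. -/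
def RBTemplate.UniqLab {k : ℕ} {A S : Type} (P : RBTemplate k A S) : Prop :=
  ∀ (ς : A × Fin k) (s t s' t' : S),
    (s, Sum.inl ς, t) ∈ P.R → (s', Sum.inl ς, t') ∈ P.R → s = s' ∧ t = t'

/-- Synchronization label of a global transition of a system whose processes are
indexed by `ι`: either a broadcast, or a `k`-wise rendezvous on action `a` by the
processes `procs 0, …, procs (k-1)`. -/
inductive Sync (k : ℕ) (A : Type) (ι : Type) where
  | bcast : Sync k A ι
  | rdz (a : A) (procs : Fin k → ι) : Sync k A ι

/-- `(f, σ, g)` is a global transition of the system with processes indexed by `ι`. -/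
def RBTrans {k : ℕ} {A S : Type} (P : RBTemplate k A S) {ι : Type}
    (f : ι → S) (σ : Sync k A ι) (g : ι → S) : Prop :=
  match σ with
  | .bcast => ∀ i, (f i, Sum.inr (), g i) ∈ P.R
  | .rdz a procs =>
      Function.Injective procs ∧
      (∀ j : Fin k, (f (procs j), Sum.inl (a, j), g (procs j)) ∈ P.R) ∧
      (∀ i, (∀ j, procs j ≠ i) → g i = f i)

/-- Process `i` moves in a transition with synchronization label `σ`. -/
def Sync.Moved {k : ℕ} {A ι : Type} (σ : Sync k A ι) (i : ι) : Prop :=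
  match σ with
  | .bcast => True
  | .rdz _ procs => ∃ j, procs j = i

/-- The edge of the template taken by process `i` in the global transition `(f, σ, g)`
(`none` if `i` does not move). -/
noncomputable def edgeAt {k : ℕ} {A S ι : Type} (f g : ι → S) (σ : Sync k A ι) (i : ι) :
    Option (EdgeT k A S) :=
  match σ with
  | .bcast => some (f i, Sum.inr (), g i)
  | .rdz a procs =>
      letI := Classical.propDecidable (∃ j, procs j = i)
      if h : ∃ j, procs j = i then some (f i, Sum.inl (a, Classical.choose h), g i)
      else none

/-- A finite path of the RB-system with processes indexed by `ι`:
a length, configurations `conf 0, …, conf len`, and transitions between them. -/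
structure FinPath {k : ℕ} {A S : Type} (P : RBTemplate k A S) (ι : Type) where
  len : ℕ
  conf : ℕ → ι → S
  sync : ℕ → Sync k A ι
  valid : ∀ t, t < len → RBTrans P (conf t) (sync t) (conf (t + 1))

/-- An infinite path of the RB-system with processes indexed by `ι`. -/
structure InfPath {k : ℕ} {A S : Type} (P : RBTemplate k A S) (ι : Type) where
  conf : ℕ → ι → S
  sync : ℕ → Sync k A ι
  valid : ∀ t, RBTrans P (conf t) (sync t) (conf (t + 1))

/-- A finite run: a finite path starting at an initial configuration. -/
def FinPath.IsRun {k : ℕ} {A S : Type} {P : RBTemplate k A S} {ι : Type}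
    (p : FinPath P ι) : Prop :=
  ∀ i, p.conf 0 i ∈ P.I

/-- An infinite run: an infinite path starting at an initial configuration. -/
def InfPath.IsRun {k : ℕ} {A S : Type} {P : RBTemplate k A S} {ι : Type}
    (p : InfPath P ι) : Prop :=
  ∀ i, p.conf 0 i ∈ P.I

/-- The projection of a finite path onto process `i`: the sequence of edges taken by `i`. -/
noncomputable def FinPath.proj {k : ℕ} {A S : Type} {P : RBTemplate k A S} {ι : Type}
    (p : FinPath P ι) (i : ι) : List (EdgeT k A S) :=
  (List.range p.len).filterMap (fun t => edgeAt (p.conf t) (p.conf (t + 1)) (p.sync t) i)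

/-- The number of broadcast transitions on a finite path. -/
noncomputable def FinPath.bcasts {k : ℕ} {A S : Type} {P : RBTemplate k A S} {ι : Type}
    (p : FinPath P ι) : ℕ :=
  Nat.card {t : ℕ // t < p.len ∧ p.sync t = Sync.bcast}

/-- The set of finite executions of the RB-system induced by `P`: projections onto
process `0` of the finite runs of the systems `P^n`, `n ∈ ℕ`. -/
def execFin {k : ℕ} {A S : Type} (P : RBTemplate k A S) : Set (List (EdgeT k A S)) :=
  {w | ∃ n : ℕ, ∃ p : FinPath P (Fin (n + 1)), p.IsRun ∧ p.proj 0 = w}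

/-- The set of infinite executions of the RB-system induced by `P`: infinite projections
onto process `0` of the runs of the systems `P^n`, `n ∈ ℕ`.  Here `ι` enumerates, in
increasing order, exactly the transitions in which process `0` moves. -/
def execInf {k : ℕ} {A S : Type} (P : RBTemplate k A S) : Set (ℕ → EdgeT k A S) :=
  {w | ∃ n : ℕ, ∃ p : InfPath P (Fin (n + 1)), p.IsRun ∧
    ∃ ι : ℕ → ℕ, StrictMono ι ∧
      (∀ t, (p.sync t).Moved 0 ↔ ∃ m, ι m = t) ∧
      (∀ m, edgeAt (p.conf (ι m)) (p.conf (ι m + 1)) (p.sync (ι m)) 0 = some (w m))}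

/-! ### The witness template `P⋆` (Figure 2):
states `p = false`, `q = true`; one rendezvous action; `k = 2`;
rendezvous edges `(p, a₁, p)`, `(p, a₂, q)`; broadcast edges `(p, 𝔟, p)`, `(q, 𝔟, p)`. -/

def Pstar : RBTemplate 2 Unit Bool where
  I := {false}
  R := {(false, Sum.inl ((), (0 : Fin 2)), false),
        (false, Sum.inl ((), (1 : Fin 2)), true),
        (false, Sum.inr (), false),
        (true, Sum.inr (), false)}

/-- The finite segment `w i, w (i+1), …, w (j-1)` of an infinite word. -/
def SegOf {α : Type} (w : ℕ → α) (i j : ℕ) : List α :=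
  (List.range (j - i)).map (fun t => w (i + t))

/-- `U · V^ω`: infinite words obtained as a prefix in `U` followed by infinitely many
consecutive nonempty segments in `V` (cut points `c 0 < c 1 < ⋯`). -/
def OmegaCat {α : Type} (U V : Language α) : Set (ℕ → α) :=
  {w | ∃ c : ℕ → ℕ, StrictMono c ∧ SegOf w 0 (c 0) ∈ U ∧
    ∀ i, SegOf w (c i) (c (i + 1)) ∈ V}

/-- A language of infinite words is ω-regular if it is a finite union
`⋃ i, U_i · V_i^ω` with `U_i`, `V_i` regular and `[] ∉ V_i`. -/
def IsOmegaRegular {α : Type} (L : Set (ℕ → α)) : Prop :=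
  ∃ (p : ℕ) (U V : Fin p → Language α),
    (∀ i, (U i).IsRegular ∧ (V i).IsRegular ∧ [] ∉ V i) ∧
    L = ⋃ i, OmegaCat (U i) (V i)

/-!
In `P⋆` every rendezvous sends a process from `p` to `q`, only a broadcast brings it back, and
process `0` takes part in every broadcast. So while process `0` keeps taking the loop `(p, a₁, p)`
the number of processes in `q` grows, and in a system of `m` processes such runs of loops have
length at most `m`. On the other hand `((p, a₁, p)ⁿ (p, 𝔟, p))^ω` is an execution of the system
with `n + 1` processes. If the executions were a finite union of sets `U · V^ω`, one of them would
contain infinitely many of these words, and splicing ever longer blocks of their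
`V`-factorisations gives a word of `U · V^ω` with unbounded runs of loops.
-/

open Finset

section Segments

variable {α : Type}

@[simp]
lemma length_segOf (w : ℕ → α) (a b : ℕ) : (SegOf w a b).length = b - a := by
  simp [SegOf]

@[simp]
lemma getElem_segOf (w : ℕ → α) (a b i : ℕ) (h : i < (SegOf w a b).length) :
    (SegOf w a b)[i] = w (a + i) := by
  simp [SegOf]

lemma segOf_eq_drop (w : ℕ → α) (a b : ℕ) : SegOf w a b = (SegOf w 0 b).drop a := by
  apply List.ext_getElem (by simp)
  intro i _ _
  simp [add_comm]

lemma segOf_append_segOf (w : ℕ → α) {a b c : ℕ} (hab : a ≤ b) (hbc : b ≤ c) :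
    SegOf w a b ++ SegOf w b c = SegOf w a c := by
  apply List.ext_getElem (by simp; omega)
  intro i h _
  rw [List.getElem_append]
  split_ifs with hi
  · simp
  · simp only [getElem_segOf, length_segOf] at h hi ⊢
    congr 1
    omega

lemma segOf_eq_flatMap {c : ℕ → ℕ} (hc : Monotone c) (w : ℕ → α) (a k : ℕ) :
    SegOf w (c a) (c (a + k)) = (List.range' a k).flatMap fun m => SegOf w (c m) (c (m + 1)) := by
  induction k with
  | zero => simp [SegOf]
  | succ k ih =>
    rw [List.range'_concat, List.flatMap_append, ← ih, List.flatMap_singleton, one_mul,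
      ← add_assoc, segOf_append_segOf w (hc (by omega)) (hc (by omega))]

lemma apply_add_eq_of_segOf_eq {w w' : ℕ → α} {a b a' b' i : ℕ}
    (h : SegOf w a b = SegOf w' a' b') (hi : i < b - a) : w (a + i) = w' (a' + i) := by
  have hlen : i < (SegOf w' a' b').length := by rw [← h]; simpa using hi
  rw [← getElem_segOf w a b i (by simpa using hi), ← getElem_segOf w' a' b' i hlen]
  exact List.getElem_of_eq h _

end Segments

section OmegaConcat

variable {α : Type} (u : List α) (v : ℕ → List α)

def concatPrefix (n : ℕ) : List α := u ++ (List.range n).flatMap v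

def omegaConcat [Inhabited α] (t : ℕ) : α := (concatPrefix u v (t + 1)).getI t

lemma concatPrefix_succ (n : ℕ) : concatPrefix u v (n + 1) = concatPrefix u v n ++ v n := by
  simp [concatPrefix, List.range_succ]

lemma concatPrefix_prefix_of_le {m n : ℕ} (h : m ≤ n) :
    concatPrefix u v m <+: concatPrefix u v n := by
  induction n, h using Nat.le_induction with
  | base => exact List.prefix_refl _
  | succ n _ ih => exact ih.trans (concatPrefix_succ u v n ▸ List.prefix_append _ _)

variable {u v}

lemma strictMono_length_concatPrefix (hv : ∀ m, v m ≠ []) :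
    StrictMono fun n => (concatPrefix u v n).length := by
  refine strictMono_nat_of_lt_succ fun n => ?_
  simpa [concatPrefix_succ, List.length_pos_iff] using hv n

variable [Inhabited α]

lemma segOf_omegaConcat_zero (hv : ∀ m, v m ≠ []) (n : ℕ) :
    SegOf (omegaConcat u v) 0 (concatPrefix u v n).length = concatPrefix u v n := by
  apply List.ext_getElem (by simp)
  intro t _ ht
  have ht' : t < (concatPrefix u v (t + 1)).length :=
    lt_of_lt_of_le (Nat.lt_succ_self t) ((strictMono_length_concatPrefix hv).id_le (t + 1))
  rw [getElem_segOf, zero_add, omegaConcat, List.getI_eq_getElem _ ht',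
    (concatPrefix_prefix_of_le u v (le_max_left (t + 1) n)).getElem ht',
    (concatPrefix_prefix_of_le u v (le_max_right (t + 1) n)).getElem ht]

lemma segOf_omegaConcat_cut (hv : ∀ m, v m ≠ []) (m : ℕ) :
    SegOf (omegaConcat u v) (concatPrefix u v m).length (concatPrefix u v (m + 1)).length = v m := by
  rw [segOf_eq_drop, segOf_omegaConcat_zero hv, concatPrefix_succ, List.drop_left]

lemma omegaConcat_mem_omegaCat {U V : Language α} (hu : u ∈ U) (hvV : ∀ m, v m ∈ V)
    (hv : ∀ m, v m ≠ []) : omegaConcat u v ∈ OmegaCat U V := by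
  refine ⟨fun n => (concatPrefix u v n).length, strictMono_length_concatPrefix hv, ?_,
    fun m => segOf_omegaConcat_cut hv m ▸ hvV m⟩
  rw [segOf_omegaConcat_zero hv]
  simpa [concatPrefix] using hu

end OmegaConcat

theorem exists_mem_omegaCat_forall_factor {α : Type} {U V : Language α} {W : ℕ → ℕ → α}
    (hW : ∀ j, W j ∈ OmegaCat U V) :
    ∃ g ∈ OmegaCat U V, ∀ j, ∃ s t, ∀ i < j, g (s + i) = W j (t + i) := by
  have : Inhabited α := ⟨W 0 0⟩
  choose c hc hcU hcV using hW
  -- The `m`-th segment of the glued word is the `m`-th `V`-segment of `W (Nat.sqrt m)`, so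
  -- block `j`, made of the segments with indices in `[j², j² + j)`, is a factor of `W j`.
  set v : ℕ → List α := fun m => SegOf (W m.sqrt) (c m.sqrt m) (c m.sqrt (m + 1)) with hv_def
  have hv : ∀ m, v m ≠ [] := fun m => by
    simpa [hv_def, ← List.length_pos_iff] using hc m.sqrt (Nat.lt_succ_self m)
  set u := SegOf (W 0) 0 (c 0 0)
  refine ⟨omegaConcat u v, omegaConcat_mem_omegaCat (hcU 0) (fun m => hcV _ m) hv, fun j => ?_⟩
  have hd := strictMono_length_concatPrefix (u := u) hv
  have hblock : SegOf (omegaConcat u v) (concatPrefix u v (j ^ 2)).length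
      (concatPrefix u v (j ^ 2 + j)).length = SegOf (W j) (c j (j ^ 2)) (c j (j ^ 2 + j)) := by
    rw [segOf_eq_flatMap hd.monotone, segOf_eq_flatMap (hc j).monotone]
    refine List.flatMap_congr fun m hm => ?_
    rw [List.mem_range'_1] at hm
    have hsqrt : m.sqrt = j := by
      rw [← Nat.add_sub_cancel' hm.1]
      exact Nat.sqrt_add_eq' j (by omega)
    rw [segOf_omegaConcat_cut hv, hv_def]
    simp only [hsqrt]
  refine ⟨_, _, fun i hi => apply_add_eq_of_segOf_eq hblock ?_⟩
  have := hd.add_le_nat j (j ^ 2)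
  simp only [add_comm j] at this
  omega

lemma edgeAt_rdz_of_eq {k : ℕ} {A S ι : Type} {f g : ι → S} {a : A} {procs : Fin k → ι}
    (hinj : Function.Injective procs) {i : ι} {j : Fin k} (h : procs j = i) :
    edgeAt f g (.rdz a procs) i = some (f i, Sum.inl (a, j), g i) := by
  have hex : ∃ j, procs j = i := ⟨j, h⟩
  rw [edgeAt, dif_pos hex, hinj ((Classical.choose_spec hex).trans h.symm)]

def rdzLoop : EdgeT 2 Unit Bool := (false, Sum.inl ((), 0), false)

def bcastLoop : EdgeT 2 Unit Bool := (false, Sum.inr (), false)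

def RunsBounded {α : Type} (x : α) (w : ℕ → α) : Prop :=
  ∃ B, ∀ t, ∃ r < B, w (t + r) ≠ x

lemma rdz_mem_pstar_iff {s t : Bool} {a : Unit} {j : Fin 2} :
    (s, Sum.inl (a, j), t) ∈ Pstar.R ↔ s = false ∧ t = decide (j = 1) := by
  fin_cases j <;> cases s <;> cases t <;> simp [Pstar]

def qCount {ι : Type} [Fintype ι] (f : ι → Bool) : ℕ := #{i | f i = true}

lemma qCount_lt_of_rbTrans_rdz {ι : Type} [Fintype ι] {f g : ι → Bool} {a : Unit}
    {procs : Fin 2 → ι} (h : RBTrans Pstar f (.rdz a procs) g) : qCount f < qCount g := by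
  obtain ⟨-, hedge, hframe⟩ := h
  have hmove : ∀ j, f (procs j) = false ∧ g (procs j) = decide (j = 1) :=
    fun j => rdz_mem_pstar_iff.mp (hedge j)
  have hsub : ({i | f i = true} : Finset ι) ⊆ ({i | g i = true} : Finset ι) := by
    intro i hi
    simp only [mem_filter, mem_univ, true_and] at hi ⊢
    by_cases hm : ∃ j, procs j = i
    · obtain ⟨j, rfl⟩ := hm
      simp [(hmove j).1] at hi
    · rw [hframe i fun j hj => hm ⟨j, hj⟩, hi]
  refine card_lt_card ((ssubset_iff_of_subset hsub).mpr ⟨procs 1, ?_, ?_⟩) <;>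
    simp [(hmove 1).1, (hmove 1).2]

lemma le_card_of_forall_sync_ne_bcast {ι : Type} [Fintype ι] (p : InfPath Pstar ι) {u k : ℕ}
    (h : ∀ s < k, p.sync (u + s) ≠ .bcast) : k ≤ Fintype.card ι := by
  have hgrow : ∀ l ≤ k, qCount (p.conf u) + l ≤ qCount (p.conf (u + l)) := by
    intro l
    induction l with
    | zero => simp
    | succ l ih =>
      intro hl
      have hvalid := p.valid (u + l)
      cases hs : p.sync (u + l) with
      | bcast => exact absurd hs (h l (by omega))
      | rdz a procs =>
        rw [hs] at hvalid
        have := qCount_lt_of_rbTrans_rdz hvalid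
        have := ih (by omega)
        show qCount (p.conf u) + (l + 1) ≤ qCount (p.conf (u + l + 1))
        omega
  calc k ≤ qCount (p.conf u) + k := Nat.le_add_left k _
    _ ≤ qCount (p.conf (u + k)) := hgrow k le_rfl
    _ ≤ Fintype.card ι := card_le_univ _

lemma runsBounded_of_mem_execInf_pstar {w : ℕ → EdgeT 2 Unit Bool} (hw : w ∈ execInf Pstar) :
    RunsBounded rdzLoop w := by
  obtain ⟨n, p, -, ι, hmono, hmoved, hedge⟩ := hw
  refine ⟨n + 2, fun t => ?_⟩
  by_contra! hrun
  have hfree : ∀ s < ι (t + (n + 1)) - ι t + 1, p.sync (ι t + s) ≠ .bcast := by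
    intro s hs hb
    obtain ⟨m, hm⟩ := (hmoved (ι t + s)).mp (by rw [hb]; trivial)
    have h1 : t ≤ m := hmono.le_iff_le.mp (by omega)
    have h2 : m ≤ t + (n + 1) :=
      hmono.le_iff_le.mp (by have := hmono.monotone (Nat.le_add_right t (n + 1)); omega)
    have hwm := hedge m
    rw [hm, hb, ← Nat.add_sub_cancel' h1, hrun (m - t) (by omega)] at hwm
    simp [edgeAt, rdzLoop] at hwm
  have hlen := le_card_of_forall_sync_ne_bcast p hfree
  have hspread := hmono.add_le_nat (n + 1) t
  rw [Fintype.card_fin] at hlen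
  rw [add_comm (n + 1) t] at hspread
  omega

def cycleWord (n t : ℕ) : EdgeT 2 Unit Bool :=
  if t % (n + 1) < n then rdzLoop else bcastLoop

lemma succ_mod_succ (n t : ℕ) :
    (t + 1) % (n + 1) = if t % (n + 1) < n then t % (n + 1) + 1 else 0 := by
  have hdiv := Nat.div_add_mod t (n + 1)
  split_ifs with h
  · rw [show t + 1 = (n + 1) * (t / (n + 1)) + (t % (n + 1) + 1) by omega, Nat.mul_add_mod,
      Nat.mod_eq_of_lt (by omega)]
  · have := Nat.mod_lt t (by omega : 0 < n + 1)
    rw [show t + 1 = (n + 1) * (t / (n + 1) + 1) by rw [Nat.mul_add]; omega, Nat.mul_mod_right]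

-- At phase `r = t % (n + 1) < n` processes `1, …, r` are in `q` and process `0` meets process
-- `r + 1`; phase `n` is a broadcast that sends everybody back to `p`.
def cycleConf (n t : ℕ) (i : Fin (n + 1)) : Bool :=
  decide (1 ≤ (i : ℕ) ∧ (i : ℕ) ≤ t % (n + 1))

def cycleSync (n t : ℕ) : Sync 2 Unit (Fin (n + 1)) :=
  if h : t % (n + 1) < n then .rdz () ![0, ⟨t % (n + 1) + 1, by omega⟩] else .bcast

lemma cycleConf_zero (n t : ℕ) : cycleConf n t 0 = false := by
  simp [cycleConf]

lemma injective_cycle_partners {n r : ℕ} (hr : r + 1 < n + 1) :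
    Function.Injective ![(0 : Fin (n + 1)), ⟨r + 1, hr⟩] := by
  intro x y hxy
  fin_cases x <;> fin_cases y <;> simp_all [Fin.ext_iff]

lemma rbTrans_cycle (n t : ℕ) :
    RBTrans Pstar (cycleConf n t) (cycleSync n t) (cycleConf n (t + 1)) := by
  have hmod := succ_mod_succ n t
  unfold cycleSync
  split_ifs with h
  · rw [if_pos h] at hmod
    refine ⟨injective_cycle_partners _, fun j => ?_, fun i hi => ?_⟩
    · rw [rdz_mem_pstar_iff]
      fin_cases j <;> simp [cycleConf, hmod]
    · have h0 : (i : ℕ) ≠ 0 := fun h0 => hi 0 (Fin.ext h0.symm)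
      have h1 : (i : ℕ) ≠ t % (n + 1) + 1 := fun h1 => hi 1 (Fin.ext h1.symm)
      simp only [cycleConf, hmod]
      exact decide_eq_decide.mpr (by omega)
  · rw [if_neg h] at hmod
    intro i
    cases cycleConf n t i <;> simp [Pstar, cycleConf, hmod] <;> rintro h rfl <;> simp at h

lemma edgeAt_cycle (n t : ℕ) :
    edgeAt (cycleConf n t) (cycleConf n (t + 1)) (cycleSync n t) 0 = some (cycleWord n t) := by
  unfold cycleSync cycleWord
  split_ifs with h
  · rw [edgeAt_rdz_of_eq (injective_cycle_partners _) (i := 0) (j := 0) rfl]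
    simp [cycleConf_zero, rdzLoop]
  · simp [edgeAt, cycleConf_zero, bcastLoop]

def cyclePath (n : ℕ) : InfPath Pstar (Fin (n + 1)) where
  conf := cycleConf n
  sync := cycleSync n
  valid := rbTrans_cycle n

lemma cycleWord_mem_execInf (n : ℕ) : cycleWord n ∈ execInf Pstar := by
  refine ⟨n, cyclePath n, fun i => ?_, id, strictMono_id, fun t => ⟨fun _ => ⟨t, rfl⟩, fun _ => ?_⟩,
    edgeAt_cycle n⟩
  · show cycleConf n 0 i = false
    exact decide_eq_false (by rw [Nat.zero_mod]; omega)
  · show (cycleSync n t).Moved 0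
    unfold cycleSync
    split_ifs
    exacts [⟨0, rfl⟩, trivial]

lemma exists_run_cycleWord {k n : ℕ} (hk : k ≤ n) (a : ℕ) :
    ∃ s ≤ k, ∀ r < k, cycleWord n (a + s + r) = rdzLoop := by
  have hdiv := Nat.div_add_mod a (n + 1)
  have hlt := Nat.mod_lt a (by omega : 0 < n + 1)
  by_cases hfit : a % (n + 1) + k ≤ n
  · refine ⟨0, Nat.zero_le k, fun r hr => ?_⟩
    have : (a + 0 + r) % (n + 1) = a % (n + 1) + r := by
      rw [show a + 0 + r = (n + 1) * (a / (n + 1)) + (a % (n + 1) + r) by omega, Nat.mul_add_mod,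
        Nat.mod_eq_of_lt (by omega)]
    rw [cycleWord, this, if_pos (by omega)]
  · refine ⟨n + 1 - a % (n + 1), by omega, fun r hr => ?_⟩
    have : (a + (n + 1 - a % (n + 1)) + r) % (n + 1) = r := by
      rw [show a + (n + 1 - a % (n + 1)) + r = (n + 1) * (a / (n + 1) + 1) + r by
        rw [Nat.mul_add]; omega, Nat.mul_add_mod, Nat.mod_eq_of_lt (by omega)]
    rw [cycleWord, this, if_pos (by omega)]

/-- There is an RB-template whose set of infinite executions is not
ω-regular; the witness is the template `P⋆`. -/
theorem execInf_pstar_not_omegaRegular : ¬ IsOmegaRegular (execInf Pstar) := by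
  rintro ⟨p, U, V, -, hL⟩
  have hcover : ∀ n, ∃ i, cycleWord n ∈ OmegaCat (U i) (V i) := fun n =>
    Set.mem_iUnion.mp (hL ▸ cycleWord_mem_execInf n)
  choose idx hidx using hcover
  obtain ⟨i, hi⟩ := Finite.exists_infinite_fiber idx
  have hN : ∀ j, ∃ n, j < n ∧ idx n = i := fun j => by
    obtain ⟨n, hn, hjn⟩ := (Set.infinite_coe_iff.mp hi).exists_gt j
    exact ⟨n, hjn, hn⟩
  choose N hjN hNi using hN
  obtain ⟨g, hg, hfactor⟩ := exists_mem_omegaCat_forall_factor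
    (W := fun j => cycleWord (N j)) fun j => hNi j ▸ hidx (N j)
  obtain ⟨B, hB⟩ := runsBounded_of_mem_execInf_pstar (hL ▸ Set.mem_iUnion.mpr ⟨i, hg⟩)
  obtain ⟨s, t, hst⟩ := hfactor (2 * B)
  obtain ⟨s', hs', hrun⟩ := exists_run_cycleWord (by have := hjN (2 * B); omega : B ≤ N (2 * B)) t
  obtain ⟨r, hr, hne⟩ := hB (s + s')
  rw [add_assoc, hst _ (by omega), ← add_assoc] at hne
  exact hne (hrun r hr)
end

section
/- Let P be an RB-template (each letter of Σ_rdz labeling at most one edge) with reachability-unwinding P^⊸. For every n ∈ ℕ, the set of runs of the RB-system P^n equals the set {ρ^◦ : ρ a run of the RB-system (P^⊸)^n}, where ρ^◦ is obtained from ρ by erasing the component numbers from all states occurring in its configurations. -/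
/-! ### The reachability-unwinding -/

/-- `X` is closed under the saturation rule for the set `J` of initial states. -/
def SatClosed {k : ℕ} {A S : Type} (P : RBTemplate k A S) (J : Set S) (X : Set S) : Prop :=
  J ⊆ X ∧ ∀ (s : S) (a : A) (_h : Fin k) (t : S), s ∈ X → (s, Sum.inl (a, _h), t) ∈ P.R →
    (∀ l : Fin k, ∃ s' t' : S, s' ∈ X ∧ (s', Sum.inl (a, l), t') ∈ P.R) → t ∈ X

/-- The saturated state set `S_i` generated from the set `J` of initial states:
the least set containing `J` and closed under the saturation rule. -/
def SatS {k : ℕ} {A S : Type} (P : RBTemplate k A S) (J : Set S) : Set S :=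
  ⋂₀ {X | SatClosed P J X}

/-- The saturated edge set `R_i` generated from the set `J` of initial states. -/
def SatR {k : ℕ} {A S : Type} (P : RBTemplate k A S) (J : Set S) : Set (EdgeT k A S) :=
  {e | ∃ (s : S) (a : A) (h : Fin k) (t : S), e = (s, Sum.inl (a, h), t) ∧
    s ∈ SatS P J ∧ e ∈ P.R ∧
    ∀ l : Fin k, ∃ s' t' : S, s' ∈ SatS P J ∧ (s', Sum.inl (a, l), t') ∈ P.R}

/-- The initial-state sets `I_i` of the components `P_i` of the reachability-unwinding
(each component `P_i = (S_i, I_i, R_i)` is completely determined by `I_i`, via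
`S_i = SatS P (compI P i)` and `R_i = SatR P (compI P i)`). -/
def compI {k : ℕ} {A S : Type} (P : RBTemplate k A S) : ℕ → Set S
  | 0 => P.I
  | i + 1 => {s | ∃ h : S, h ∈ SatS P (compI P i) ∧ (h, Sum.inr (), s) ∈ P.R}

/-- `(n, m)` is the (least) lasso pair of the unwinding construction: the components
`P_0, …, P_m` are pairwise distinct and `P_n = P_{m+1}`.  The prefix length is `n` and
the period is `r = m + 1 - n`. -/
def IsLasso {k : ℕ} {A S : Type} (P : RBTemplate k A S) (n m : ℕ) : Prop :=
  n ≤ m ∧ compI P n = compI P (m + 1) ∧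
    ∀ i j : ℕ, i < j → j ≤ m → compI P i ≠ compI P j

/-- The component number associated with `i`, for the lasso pair `(n, m)`. -/
def compAt (n m i : ℕ) : ℕ := if i ≤ m then i else n + (i - n) % (m + 1 - n)

/-- The reachability-unwinding `P^⊸` of `P`, for the lasso pair `(n, m)`: states are
pairs (state of `P`, component number). -/
def unwind {k : ℕ} {A S : Type} (P : RBTemplate k A S) (n m : ℕ) :
    RBTemplate k A (S × ℕ) where
  I := {x | x.1 ∈ P.I ∧ x.2 = 0}
  R := {e | (∃ (s t : S) (ς : A × Fin k) (i : ℕ), i ≤ m ∧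
              e = ((s, i), Sum.inl ς, (t, i)) ∧ (s, Sum.inl ς, t) ∈ SatR P (compI P i)) ∨
            (∃ (s t : S) (i : ℕ), i ≤ m ∧
              e = ((s, i), Sum.inr (), (t, compAt n m (i + 1))) ∧
              s ∈ SatS P (compI P i) ∧ (s, Sum.inr (), t) ∈ P.R)}

/-- Erasing the component numbers from an edge of the unwinding. -/
def erE {k : ℕ} {A S : Type} (e : EdgeT k A (S × ℕ)) : EdgeT k A S :=
  (e.1.1, e.2.1, e.2.2.1)

/-! A run of `P^⊸` loses nothing but component numbers, so it erases to a run of `P`.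
Conversely, a run of `P` is lifted by tagging each configuration with the component
`compAt n m b`, where `b` is the number of broadcasts performed so far: by induction, every
state reached after `b` broadcasts lies in `S_b`, and the rendezvous it takes lie in `R_b`
because all `k` participants sit in `S_b`. As `P_n = P_{m+1}` makes `i ↦ P_i` eventually
periodic, `P_{compAt n m b} = P_b`, so these are edges of `P^⊸`. -/

section Unwinding

variable {k : ℕ} {A S : Type} {P : RBTemplate k A S}

theorem satClosed_satS (P : RBTemplate k A S) (J : Set S) : SatClosed P J (SatS P J) := by
  refine ⟨fun s hs => Set.mem_sInter.2 fun X hX => hX.1 hs, ?_⟩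
  intro s a h t hs he hside
  refine Set.mem_sInter.2 fun X hX => hX.2 s a h t (Set.mem_sInter.1 hs X hX) he fun l => ?_
  obtain ⟨s', t', hs', he'⟩ := hside l
  exact ⟨s', t', Set.mem_sInter.1 hs' X hX, he'⟩

theorem satR_subset (J : Set S) : SatR P J ⊆ P.R := by
  rintro e ⟨-, -, -, -, -, -, he, -⟩
  exact he

theorem compI_succ_eq_of_eq {i j : ℕ} (h : compI P i = compI P j) :
    compI P (i + 1) = compI P (j + 1) := by
  simp only [compI, h]

theorem compI_periodic {n m : ℕ} (hnm : n ≤ m) (hper : compI P n = compI P (m + 1)) :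
    Function.Periodic (fun j => compI P (n + j)) (m + 1 - n) := by
  intro j
  show compI P (n + (j + (m + 1 - n))) = compI P (n + j)
  induction j with
  | zero => simpa [show n + (m + 1 - n) = m + 1 by omega] using hper.symm
  | succ j ih =>
    rw [show n + (j + 1 + (m + 1 - n)) = n + (j + (m + 1 - n)) + 1 by omega]
    exact compI_succ_eq_of_eq ih

theorem compAt_le {n m : ℕ} (hnm : n ≤ m) (i : ℕ) : compAt n m i ≤ m := by
  unfold compAt
  split
  · assumption
  · have := Nat.mod_lt (i - n) (show 0 < m + 1 - n by omega)
    omega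

theorem compAt_of_le {n m i : ℕ} (hnm : n ≤ m) (hi : n ≤ i) :
    compAt n m i = n + (i - n) % (m + 1 - n) := by
  unfold compAt
  split
  · rw [Nat.mod_eq_of_lt (by omega)]
    omega
  · rfl

theorem compAt_compAt_succ {n m : ℕ} (hnm : n ≤ m) (i : ℕ) :
    compAt n m (compAt n m i + 1) = compAt n m (i + 1) := by
  rcases lt_or_ge i n with hi | hi
  · rw [show compAt n m i = i from if_pos (by omega)]
  · rw [compAt_of_le hnm hi, compAt_of_le hnm (by omega), compAt_of_le hnm (by omega),
      show n + (i - n) % (m + 1 - n) + 1 - n = (i - n) % (m + 1 - n) + 1 by omega,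
      Nat.mod_add_mod, show i + 1 - n = i - n + 1 by omega]

theorem compI_compAt {n m : ℕ} (hnm : n ≤ m) (hper : compI P n = compI P (m + 1)) (i : ℕ) :
    compI P (compAt n m i) = compI P i := by
  rcases lt_or_ge i n with hi | hi
  · rw [show compAt n m i = i from if_pos (by omega)]
  · rw [compAt_of_le hnm hi, (compI_periodic hnm hper).map_mod_nat (i - n),
      Nat.add_sub_cancel' hi]

theorem erE_mem_of_mem_unwind {n m : ℕ} {e : EdgeT k A (S × ℕ)} (he : e ∈ (unwind P n m).R) :
    erE e ∈ P.R := by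
  rcases he with ⟨s, t, ς, i, -, rfl, he⟩ | ⟨s, t, i, -, rfl, -, he⟩
  exacts [satR_subset _ he, he]

def Sync.bcastCount {ι : Type} : Sync k A ι → ℕ
  | .bcast => 1
  | .rdz _ _ => 0

def bcastsBefore {ι : Type} (sync : ℕ → Sync k A ι) : ℕ → ℕ
  | 0 => 0
  | t + 1 => bcastsBefore sync t + (sync t).bcastCount

variable {ι : Type} {f g : ι → S} {σ : Sync k A ι}

theorem RBTrans.erase {n m : ℕ} {f g : ι → S × ℕ} (h : RBTrans (unwind P n m) f σ g) :
    RBTrans P (fun i => (f i).1) σ (fun i => (g i).1) := by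
  cases σ with
  | bcast => exact fun i => erE_mem_of_mem_unwind (h i)
  | rdz a procs =>
    obtain ⟨hinj, hedge, hidle⟩ := h
    exact ⟨hinj, fun j => erE_mem_of_mem_unwind (hedge j),
      fun i hi => congrArg Prod.fst (hidle i hi)⟩

theorem RBTrans.rdz_mem_satR {J : Set S} {a : A} {procs : Fin k → ι}
    (h : RBTrans P f (.rdz a procs) g) (hf : ∀ i, f i ∈ SatS P J) (j : Fin k) :
    (f (procs j), Sum.inl (a, j), g (procs j)) ∈ SatR P J :=
  ⟨_, a, j, _, rfl, hf _, h.2.1 j, fun l => ⟨_, _, hf (procs l), h.2.1 l⟩⟩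

theorem RBTrans.mem_satS {b : ℕ} (h : RBTrans P f σ g)
    (hf : ∀ i, f i ∈ SatS P (compI P b)) (i : ι) :
    g i ∈ SatS P (compI P (b + σ.bcastCount)) := by
  cases σ with
  | bcast => exact (satClosed_satS P _).1 ⟨f i, hf i, h i⟩
  | rdz a procs =>
    by_cases hi : ∃ j, procs j = i
    · obtain ⟨j, rfl⟩ := hi
      exact (satClosed_satS P _).2 _ a j _ (hf _) (h.2.1 j)
        fun l => ⟨_, _, hf (procs l), h.2.1 l⟩
    · rw [h.2.2 i fun j hj => hi ⟨j, hj⟩]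
      exact hf i

theorem RBTrans.lift {n m b : ℕ} (hnm : n ≤ m) (hper : compI P n = compI P (m + 1))
    (h : RBTrans P f σ g) (hf : ∀ i, f i ∈ SatS P (compI P b)) :
    RBTrans (unwind P n m) (fun i => (f i, compAt n m b)) σ
      (fun i => (g i, compAt n m (b + σ.bcastCount))) := by
  have hcomp : compI P (compAt n m b) = compI P b := compI_compAt hnm hper b
  cases σ with
  | bcast =>
    refine fun i => Or.inr ⟨f i, g i, _, compAt_le hnm b, ?_, hcomp ▸ hf i, h i⟩
    rw [Sync.bcastCount, compAt_compAt_succ hnm]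
  | rdz a procs =>
    refine ⟨h.1, fun j => Or.inl ⟨_, _, (a, j), _, compAt_le hnm b, rfl, ?_⟩,
      fun i hi => by simp only [Sync.bcastCount, h.2.2 i hi, add_zero]⟩
    exact hcomp ▸ h.rdz_mem_satR hf j

def liftConf (n m : ℕ) (conf : ℕ → ι → S) (sync : ℕ → Sync k A ι) :
    ℕ → ι → S × ℕ :=
  fun t i => (conf t i, compAt n m (bcastsBefore sync t))

variable {conf : ℕ → ι → S} {sync : ℕ → Sync k A ι} {T : ℕ}

theorem mem_satS_bcastsBefore (hinit : ∀ i, conf 0 i ∈ P.I)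
    (hv : ∀ t < T, RBTrans P (conf t) (sync t) (conf (t + 1))) :
    ∀ t ≤ T, ∀ i, conf t i ∈ SatS P (compI P (bcastsBefore sync t)) := by
  intro t
  induction t with
  | zero => exact fun _ i => (satClosed_satS P _).1 (hinit i)
  | succ t ih => exact fun ht => (hv t ht).mem_satS (ih (by omega))

theorem liftConf_valid {n m : ℕ} (hnm : n ≤ m) (hper : compI P n = compI P (m + 1))
    (hinit : ∀ i, conf 0 i ∈ P.I) (hv : ∀ t < T, RBTrans P (conf t) (sync t) (conf (t + 1)))
    (t : ℕ) (ht : t < T) :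
    RBTrans (unwind P n m) (liftConf n m conf sync t) (sync t) (liftConf n m conf sync (t + 1)) :=
  (hv t ht).lift hnm hper (mem_satS_bcastsBefore hinit hv t ht.le)

theorem liftConf_zero_mem_unwind {n m : ℕ} (hinit : ∀ i, conf 0 i ∈ P.I) (i : ι) :
    liftConf n m conf sync 0 i ∈ (unwind P n m).I :=
  ⟨hinit i, (if_pos (Nat.zero_le m) : compAt n m 0 = 0)⟩

variable {n m : ℕ}

def FinPath.erase (ρ : FinPath (unwind P n m) ι) : FinPath P ι :=
  ⟨ρ.len, fun t i => (ρ.conf t i).1, ρ.sync, fun t ht => (ρ.valid t ht).erase⟩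

def InfPath.erase (ρ : InfPath (unwind P n m) ι) : InfPath P ι :=
  ⟨fun t i => (ρ.conf t i).1, ρ.sync, fun t => (ρ.valid t).erase⟩

def FinPath.lift (hnm : n ≤ m) (hper : compI P n = compI P (m + 1)) (q : FinPath P ι)
    (hq : q.IsRun) : FinPath (unwind P n m) ι :=
  ⟨q.len, liftConf n m q.conf q.sync, q.sync, liftConf_valid hnm hper hq q.valid⟩

def InfPath.lift (hnm : n ≤ m) (hper : compI P n = compI P (m + 1)) (q : InfPath P ι)
    (hq : q.IsRun) : InfPath (unwind P n m) ι :=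
  ⟨liftConf n m q.conf q.sync, q.sync,
    fun t => liftConf_valid hnm hper hq (T := t + 1) (fun s _ => q.valid s) t t.lt_succ_self⟩

end Unwinding

theorem runs_eq_erased_runs_of_unwinding_general
    {k : ℕ} {A S : Type}
    (P : RBTemplate k A S)
    (n₀ m : ℕ) (hL : IsLasso P n₀ m) (N : ℕ) :
    (∀ ρ : FinPath (unwind P n₀ m) (Fin N), ρ.IsRun →
      ∃ q : FinPath P (Fin N), q.IsRun ∧ q.len = ρ.len ∧
        (∀ t, t ≤ ρ.len → ∀ i, q.conf t i = (ρ.conf t i).1) ∧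
        (∀ t, t < ρ.len → q.sync t = ρ.sync t)) ∧
    (∀ q : FinPath P (Fin N), q.IsRun →
      ∃ ρ : FinPath (unwind P n₀ m) (Fin N), ρ.IsRun ∧ ρ.len = q.len ∧
        (∀ t, t ≤ q.len → ∀ i, (ρ.conf t i).1 = q.conf t i) ∧
        (∀ t, t < q.len → ρ.sync t = q.sync t)) ∧
    (∀ ρ : InfPath (unwind P n₀ m) (Fin N), ρ.IsRun →
      ∃ q : InfPath P (Fin N), q.IsRun ∧
        (∀ t i, q.conf t i = (ρ.conf t i).1) ∧ (∀ t, q.sync t = ρ.sync t)) ∧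
    (∀ q : InfPath P (Fin N), q.IsRun →
      ∃ ρ : InfPath (unwind P n₀ m) (Fin N), ρ.IsRun ∧
        (∀ t i, (ρ.conf t i).1 = q.conf t i) ∧ (∀ t, ρ.sync t = q.sync t)) := by
  obtain ⟨hnm, hper, -⟩ := hL
  refine ⟨fun ρ hρ => ⟨ρ.erase, fun i => (hρ i).1, rfl, fun _ _ _ => rfl, fun _ _ => rfl⟩,
    fun q hq => ⟨q.lift hnm hper hq, liftConf_zero_mem_unwind hq, rfl, fun _ _ _ => rfl,
      fun _ _ => rfl⟩,
    fun ρ hρ => ⟨ρ.erase, fun i => (hρ i).1, fun _ _ => rfl, fun _ => rfl⟩,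
    fun q hq => ⟨q.lift hnm hper hq, liftConf_zero_mem_unwind hq, fun _ _ => rfl,
      fun _ => rfl⟩⟩

/-- For every `n`, the runs (finite and infinite) of the RB-system `P^n`
are exactly the runs of the RB-system `(P^⊸)^n` with component numbers erased. -/
theorem runs_eq_erased_runs_of_unwinding
    {k : ℕ} {A S : Type} [Fintype A] [Fintype S] (hk : 2 ≤ k)
    (P : RBTemplate k A S) (hTot : P.BTotal) (hU : P.UniqLab)
    (n₀ m : ℕ) (hL : IsLasso P n₀ m) (N : ℕ) :
    (∀ ρ : FinPath (unwind P n₀ m) (Fin N), ρ.IsRun →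
      ∃ q : FinPath P (Fin N), q.IsRun ∧ q.len = ρ.len ∧
        (∀ t, t ≤ ρ.len → ∀ i, q.conf t i = (ρ.conf t i).1) ∧
        (∀ t, t < ρ.len → q.sync t = ρ.sync t)) ∧
    (∀ q : FinPath P (Fin N), q.IsRun →
      ∃ ρ : FinPath (unwind P n₀ m) (Fin N), ρ.IsRun ∧ ρ.len = q.len ∧
        (∀ t, t ≤ q.len → ∀ i, (ρ.conf t i).1 = q.conf t i) ∧
        (∀ t, t < q.len → ρ.sync t = q.sync t)) ∧
    (∀ ρ : InfPath (unwind P n₀ m) (Fin N), ρ.IsRun →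
      ∃ q : InfPath P (Fin N), q.IsRun ∧
        (∀ t i, q.conf t i = (ρ.conf t i).1) ∧ (∀ t, q.sync t = ρ.sync t)) ∧
    (∀ q : InfPath P (Fin N), q.IsRun →
      ∃ ρ : InfPath (unwind P n₀ m) (Fin N), ρ.IsRun ∧
        (∀ t i, (ρ.conf t i).1 = q.conf t i) ∧ (∀ t, ρ.sync t = q.sync t)) :=
  runs_eq_erased_runs_of_unwinding_general P n₀ m hL N
end

section
/- (RB-System Composition) Let P be an RB-template, let b ∈ ℕ, and let π^1, …, π^m be finite runs of the systems P^{n_1}, …, P^{n_m} respectively, each containing exactly b broadcast transitions. Then there is a finite run π of P^{n_1 + ⋯ + n_m} containing exactly b broadcast transitions such that, identifying the processes of P^{n_1+⋯+n_m} with the disjoint union of the processes of the systems P^{n_j}, for every j ∈ [m] and every process i of P^{n_j}, the projection of π onto the process corresponding to (j,i) equals the projection π^j(i). -/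
/-!
Induction on the total length of the runs plus `b`, building the composed run from the front.
If some run starts with a rendezvous, the composed system performs it alone (the other components
stand still) and that run loses its first step. Otherwise every nonempty run starts with a
broadcast. As all runs have the same number `r` of broadcasts, either `r > 0`, every run starts
with a broadcast, and one global broadcast advances all of them at once, or `r = 0` and all runs
are empty.
-/

open Finset

theorem List.filterMap_range_succ {α : Type*} (F : ℕ → Option α) (L : ℕ) :
    (List.range (L + 1)).filterMap F =
      (F 0).toList ++ (List.range L).filterMap (fun t => F (t + 1)) := by
  rw [List.range_succ_eq_map, List.filterMap_cons, List.filterMap_map]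
  cases F 0 <;> rfl

theorem Finset.card_filter_range_succ (Q : ℕ → Prop) [DecidablePred Q] (L : ℕ) :
    #{t ∈ range (L + 1) | Q t} = (if Q 0 then 1 else 0) + #{t ∈ range L | Q (t + 1)} := by
  rw [card_filter, card_filter, sum_range_succ', add_comm]

section Composition

variable {k : ℕ} {A S : Type} {P : RBTemplate k A S}

def Sync.map {ι ι' : Type} (e : ι → ι') : Sync k A ι → Sync k A ι'
  | .bcast => .bcast
  | .rdz a procs => .rdz a (e ∘ procs)

theorem edgeAt_map {ι ι' : Type} {e : ι → ι'} (he : Function.Injective e) (f g : ι' → S)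
    (σ : Sync k A ι) (i : ι) :
    edgeAt f g (σ.map e) (e i) = edgeAt (f ∘ e) (g ∘ e) σ i := by
  cases σ with
  | bcast => rfl
  | rdz a procs =>
    simp only [edgeAt, Sync.map, Function.comp_apply]
    by_cases hex : ∃ l, procs l = i
    · rw [dif_pos (by simpa only [he.eq_iff] using hex), dif_pos hex]
      congr
      exact funext fun l => propext he.eq_iff
    · rw [dif_neg (by simpa only [he.eq_iff] using hex), dif_neg hex]

theorem edgeAt_map_rdz_of_notMem_range {ι ι' : Type} {e : ι → ι'} (f g : ι' → S) (a : A)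
    (procs : Fin k → ι) {x : ι'} (hx : x ∉ Set.range e) :
    edgeAt f g ((Sync.rdz a procs).map e) x = none := by
  simp only [edgeAt, Sync.map, Function.comp_apply]
  exact dif_neg fun ⟨l, hl⟩ => hx ⟨procs l, hl⟩

namespace FinPath

variable {ι : Type}

def tail (p : FinPath P ι) : FinPath P ι where
  len := p.len - 1
  conf t := p.conf (t + 1)
  sync t := p.sync (t + 1)
  valid t ht := p.valid (t + 1) (by omega)

def cons (f : ι → S) (σ : Sync k A ι) (q : FinPath P ι) (h : RBTrans P f σ (q.conf 0)) :
    FinPath P ι where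
  len := q.len + 1
  conf t := Nat.casesOn t f q.conf
  sync t := Nat.casesOn t σ q.sync
  valid
    | 0, _ => h
    | t + 1, ht => q.valid t (by omega)

def nil (f : ι → S) : FinPath P ι where
  len := 0
  conf _ := f
  sync _ := .bcast
  valid _ h := absurd h (Nat.not_lt_zero _)

theorem proj_cons (f : ι → S) (σ : Sync k A ι) (q : FinPath P ι) (h) (i : ι) :
    (cons f σ q h).proj i = (edgeAt f (q.conf 0) σ i).toList ++ q.proj i :=
  List.filterMap_range_succ _ _

theorem proj_eq_of_pos (p : FinPath P ι) (hp : 0 < p.len) (i : ι) :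
    p.proj i = (edgeAt (p.conf 0) (p.conf 1) (p.sync 0) i).toList ++ p.tail.proj i := by
  obtain ⟨L, hL⟩ := Nat.exists_eq_add_of_lt hp
  simp only [proj, tail, hL, zero_add]
  exact List.filterMap_range_succ _ _

theorem proj_eq_nil_of_len_eq_zero (p : FinPath P ι) (hp : p.len = 0) (i : ι) : p.proj i = [] := by
  simp [proj, hp]

open scoped Classical in
theorem bcasts_eq_card (p : FinPath P ι) : p.bcasts = #{t ∈ range p.len | p.sync t = .bcast} := by
  rw [bcasts, ← Nat.card_eq_finsetCard]
  exact Nat.card_congr (Equiv.subtypeEquivRight fun t => by simp)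

open scoped Classical in
theorem bcasts_cons (f : ι → S) (σ : Sync k A ι) (q : FinPath P ι) (h) :
    (cons f σ q h).bcasts = (if σ = .bcast then 1 else 0) + q.bcasts := by
  rw [bcasts_eq_card, bcasts_eq_card]
  exact card_filter_range_succ _ _

open scoped Classical in
theorem bcasts_eq_of_pos (p : FinPath P ι) (hp : 0 < p.len) :
    p.bcasts = (if p.sync 0 = .bcast then 1 else 0) + p.tail.bcasts := by
  obtain ⟨L, hL⟩ := Nat.exists_eq_add_of_lt hp
  rw [bcasts_eq_card, bcasts_eq_card]
  simp only [tail, hL, zero_add, Nat.add_sub_cancel]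
  exact card_filter_range_succ _ _

theorem bcasts_eq_zero_of_len_eq_zero (p : FinPath P ι) (hp : p.len = 0) : p.bcasts = 0 := by
  simp [bcasts_eq_card, hp]

theorem bcasts_tail_of_sync_ne_bcast (p : FinPath P ι) (hp : 0 < p.len) (hs : p.sync 0 ≠ .bcast) :
    p.tail.bcasts = p.bcasts := by
  simp [p.bcasts_eq_of_pos hp, hs]

theorem bcasts_tail_of_sync_eq_bcast (p : FinPath P ι) (hp : 0 < p.len) (hs : p.sync 0 = .bcast) :
    p.tail.bcasts = p.bcasts - 1 := by
  simp [p.bcasts_eq_of_pos hp, hs]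

end FinPath

variable {J : Type} {ι : J → Type}

theorem edgeAt_sigma_mk (F G : (j : J) → ι j → S) {j : J} (σ : Sync k A (ι j)) (i : ι j) :
    edgeAt (Sigma.uncurry F) (Sigma.uncurry G) (σ.map (Sigma.mk j)) ⟨j, i⟩ =
      edgeAt (F j) (G j) σ i :=
  edgeAt_map sigma_mk_injective _ _ σ i

theorem edgeAt_sigma_mk_rdz_of_ne (F G : (j : J) → ι j → S) {j j' : J} (hj : j' ≠ j) (a : A)
    (procs : Fin k → ι j) (i : ι j') :
    edgeAt (Sigma.uncurry F) (Sigma.uncurry G) ((Sync.rdz a procs).map (Sigma.mk j)) ⟨j', i⟩ =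
      none :=
  edgeAt_map_rdz_of_notMem_range _ _ a procs fun ⟨_, h⟩ => hj (congrArg Sigma.fst h).symm

theorem rbTrans_sigma_rdz [DecidableEq J] {F : (j : J) → ι j → S} {j : J} {g : ι j → S}
    {a : A} {procs : Fin k → ι j} (h : RBTrans P (F j) (.rdz a procs) g) :
    RBTrans P (Sigma.uncurry F) ((Sync.rdz a procs).map (Sigma.mk j))
      (Sigma.uncurry (Function.update F j g)) := by
  obtain ⟨hinj, hedge, hfix⟩ := h
  refine ⟨sigma_mk_injective.comp hinj, fun l => by simpa [Sigma.uncurry] using hedge l, ?_⟩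
  rintro ⟨j', i⟩ hi
  by_cases hj : j' = j
  · subst hj
    simpa [Sigma.uncurry] using hfix i fun l hl => hi l (by simp [hl])
  · simp [Sigma.uncurry, Function.update_of_ne hj]

def IsComposition (q : (j : J) → FinPath P (ι j)) (m : FinPath P ((j : J) × ι j)) : Prop :=
  m.conf 0 = Sigma.uncurry (fun j => (q j).conf 0) ∧ ∀ j i, m.proj ⟨j, i⟩ = (q j).proj i

theorem isComposition_nil (q : (j : J) → FinPath P (ι j)) (hq : ∀ j, (q j).len = 0) :
    IsComposition q (.nil (Sigma.uncurry fun j => (q j).conf 0)) :=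
  ⟨rfl, fun j i => ((q j).proj_eq_nil_of_len_eq_zero (hq j) i).symm⟩

theorem exists_composition_of_rdz [DecidableEq J] (q : (j : J) → FinPath P (ι j)) {j : J}
    (hlen : 0 < (q j).len) {a : A} {procs : Fin k → ι j} (hsync : (q j).sync 0 = .rdz a procs)
    {m : FinPath P ((j : J) × ι j)} (hm : IsComposition (Function.update q j (q j).tail) m) :
    ∃ m' : FinPath P ((j : J) × ι j), IsComposition q m' ∧ m'.bcasts = m.bcasts := by
  have hconf : (fun j' => (Function.update q j (q j).tail j').conf 0) =
      Function.update (fun j' => (q j').conf 0) j ((q j).conf 1) :=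
    funext (Function.apply_update (fun _ p => FinPath.conf p 0) q j (q j).tail)
  have htrans : RBTrans P (Sigma.uncurry fun j => (q j).conf 0)
      ((Sync.rdz a procs).map (Sigma.mk j)) (m.conf 0) := by
    rw [hm.1, hconf]
    apply rbTrans_sigma_rdz
    simpa [hsync] using (q j).valid 0 hlen
  refine ⟨.cons _ _ m htrans, ⟨rfl, fun j' i => ?_⟩, by simp [FinPath.bcasts_cons, Sync.map]⟩
  rw [FinPath.proj_cons, hm.2, hm.1, hconf]
  by_cases hj : j' = j
  · subst hj
    rw [edgeAt_sigma_mk, Function.update_self, Function.update_self, (q j').proj_eq_of_pos hlen,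
      hsync]
  · rw [edgeAt_sigma_mk_rdz_of_ne _ _ hj, Function.update_of_ne hj]
    rfl

theorem exists_composition_of_bcast (q : (j : J) → FinPath P (ι j)) (hlen : ∀ j, 0 < (q j).len)
    (hsync : ∀ j, (q j).sync 0 = .bcast) {m : FinPath P ((j : J) × ι j)}
    (hm : IsComposition (fun j => (q j).tail) m) :
    ∃ m' : FinPath P ((j : J) × ι j), IsComposition q m' ∧ m'.bcasts = m.bcasts + 1 := by
  have htrans : RBTrans P (Sigma.uncurry fun j => (q j).conf 0) .bcast (m.conf 0) := by
    rw [hm.1]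
    intro x
    have h := (q x.1).valid 0 (hlen x.1)
    rw [hsync] at h
    exact h x.2
  refine ⟨.cons _ _ m htrans, ⟨rfl, fun j i => ?_⟩, by simp [FinPath.bcasts_cons, add_comm]⟩
  rw [FinPath.proj_cons, hm.2, hm.1, (q j).proj_eq_of_pos (hlen j), hsync]
  rfl

theorem sum_len_update_tail_lt [Fintype J] [DecidableEq J] (q : (j : J) → FinPath P (ι j))
    {j : J} (hlen : 0 < (q j).len) :
    ∑ j', (Function.update q j (q j).tail j').len < ∑ j', (q j').len := by
  refine sum_lt_sum (fun j' _ => ?_) ⟨j, mem_univ j, ?_⟩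
  · rcases eq_or_ne j' j with rfl | hj
    · rw [Function.update_self]
      exact Nat.sub_le _ _
    · rw [Function.update_of_ne hj]
  · rw [Function.update_self]
    exact Nat.sub_lt hlen one_pos

theorem exists_composition [Fintype J] (q : (j : J) → FinPath P (ι j))
    (r : ℕ) (hq : ∀ j, (q j).bcasts = r) :
    ∃ m : FinPath P ((j : J) × ι j), IsComposition q m ∧ m.bcasts = r := by
  classical
  by_cases hrdz : ∃ j, 0 < (q j).len ∧ (q j).sync 0 ≠ .bcast
  · obtain ⟨j, hlen, hne⟩ := hrdz
    obtain ⟨a, procs, hsync⟩ : ∃ a procs, (q j).sync 0 = .rdz a procs := by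
      cases h : (q j).sync 0 <;> simp_all
    have hq' : ∀ j', (Function.update q j (q j).tail j').bcasts = r := fun j' => by
      rw [Function.apply_update (fun _ p => FinPath.bcasts p) q j (q j).tail,
        (q j).bcasts_tail_of_sync_ne_bcast hlen hne, Function.update_eq_self]
      exact hq j'
    have hdec := sum_len_update_tail_lt q hlen
    obtain ⟨m, hm, hmb⟩ := exists_composition (Function.update q j (q j).tail) r hq'
    obtain ⟨m', hm', hm'b⟩ := exists_composition_of_rdz q hlen hsync hm
    exact ⟨m', hm', hm'b.trans hmb⟩
  push Not at hrdz
  rcases Nat.eq_zero_or_pos r with rfl | hr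
  · have hlen : ∀ j, (q j).len = 0 := fun j => by
      by_contra hpos
      have := (q j).bcasts_eq_of_pos (Nat.pos_of_ne_zero hpos)
      simp only [hrdz j (Nat.pos_of_ne_zero hpos), hq j, if_true] at this
      omega
    exact ⟨_, isComposition_nil q hlen, FinPath.bcasts_eq_zero_of_len_eq_zero _ rfl⟩
  have hlen : ∀ j, 0 < (q j).len := fun j => Nat.pos_of_ne_zero fun h => by
    have := (q j).bcasts_eq_zero_of_len_eq_zero h
    rw [hq j] at this
    omega
  have hq' : ∀ j, (q j).tail.bcasts = r - 1 := fun j => by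
    rw [(q j).bcasts_tail_of_sync_eq_bcast (hlen j) (hrdz j (hlen j)), hq j]
  have hdec : ∑ j, (q j).tail.len ≤ ∑ j, (q j).len :=
    sum_le_sum fun j _ => Nat.sub_le _ _
  obtain ⟨m, hm, hmb⟩ := exists_composition (fun j => (q j).tail) (r - 1) hq'
  obtain ⟨m', hm', hm'b⟩ := exists_composition_of_bcast q hlen (fun j => hrdz j (hlen j)) hm
  exact ⟨m', hm', by omega⟩
termination_by (∑ j, (q j).len) + r

end Composition

theorem rb_system_composition_general
    {k : ℕ} {A S : Type}
    (P : RBTemplate k A S)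
    (M : ℕ) (n : Fin M → ℕ) (b : ℕ)
    (p : (j : Fin M) → FinPath P (Fin (n j)))
    (hrun : ∀ j, (p j).IsRun) (hb : ∀ j, (p j).bcasts = b) :
    ∃ q : FinPath P ((j : Fin M) × Fin (n j)), q.IsRun ∧ q.bcasts = b ∧
      ∀ (j : Fin M) (i : Fin (n j)), q.proj ⟨j, i⟩ = (p j).proj i := by
  obtain ⟨q, ⟨hconf, hproj⟩, hbq⟩ := exists_composition p b hb
  exact ⟨q, fun x => hconf ▸ hrun x.1 x.2, hbq, hproj⟩

/-- **RB-System Composition.** Given finite runs `p j` of the systems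
`P^(n j)` (j ∈ [M]), each with exactly `b` broadcast transitions, there is a single
finite run of the system whose processes are the disjoint union of the processes of
the systems `P^(n j)`, with exactly `b` broadcast transitions, whose projection onto
the process corresponding to `(j, i)` is the projection of `p j` onto `i`. -/
theorem rb_system_composition
    {k : ℕ} {A S : Type} [Fintype A] [Fintype S] (hk : 2 ≤ k)
    (P : RBTemplate k A S) (hTot : P.BTotal)
    (M : ℕ) (n : Fin M → ℕ) (b : ℕ)
    (p : (j : Fin M) → FinPath P (Fin (n j)))
    (hrun : ∀ j, (p j).IsRun) (hb : ∀ j, (p j).bcasts = b) :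
    ∃ q : FinPath P ((j : Fin M) × Fin (n j)), q.IsRun ∧ q.bcasts = b ∧
      ∀ (j : Fin M) (i : Fin (n j)), q.proj ⟨j, i⟩ = (p j).proj i :=
  rb_system_composition_general P M n b p hrun hb
end
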